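/- Let q > 1 be an integer, χ a Dirichlet character mod q, m the smallest prime not dividing q. Then for all s = σ+it with σ ≥ 2, |-(m^s/(χ(m)·log m))·(L'/L)(s,χ) - 1| ≤ 2·(1 + 8m/σ)·(1 + 1/m)^{-σ}. -/

import Mathlib

/-!
For `re s > 1`, `-L'/L(s, χ) = ∑ χ(n) Λ(n) n^{-s}`, and `χ(n) Λ(n) = 0` for `n < m`. So after
dividing by the term `n = m`, whose size is `log m / m^σ`, the error is at most
`m^σ / log m · ∑_{n > m} log n · n^{-σ}`. Since `log x · x^{-σ}` decreases for `x ≥ e`, this tail is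
at most `log(m+1) (m+1)^{-σ} + ∫_{m+1}^∞ log x · x^{-σ} dx`, and the integral has a closed form.
-/

open Real

/-- For `σ > 1` and `x > 0` this is `∫ t in Ioi x, log t * t ^ (-σ)`. -/
noncomputable def logRpowTail (σ x : ℝ) : ℝ :=
  (log x / (σ - 1) + 1 / (σ - 1) ^ 2) * x ^ (1 - σ)

lemma logRpowTail_nonneg {σ x : ℝ} (hσ : 1 < σ) (hx : 1 ≤ x) : 0 ≤ logRpowTail σ x := by
  have hσ' : 0 < σ - 1 := by linarith
  have hlog : 0 ≤ log x := log_nonneg hx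
  have hpow : 0 ≤ x ^ (1 - σ) := rpow_nonneg (by linarith) _
  unfold logRpowTail
  positivity

lemma rpow_one_sub_eq_mul_rpow_neg {x : ℝ} (hx : 0 < x) (σ : ℝ) :
    x ^ (1 - σ) = x * x ^ (-σ) := by
  rw [sub_eq_add_neg, rpow_add hx, rpow_one]

lemma hasDerivAt_logRpowTail {σ x : ℝ} (hσ : σ ≠ 1) (hx : 0 < x) :
    HasDerivAt (logRpowTail σ) (-(log x * x ^ (-σ))) x := by
  have hσ' : σ - 1 ≠ 0 := sub_ne_zero.mpr hσ
  have hlog := ((hasDerivAt_log hx.ne').div_const (σ - 1)).add_const (1 / (σ - 1) ^ 2)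
  refine (hlog.mul (hasDerivAt_rpow_const (p := 1 - σ) (Or.inl hx.ne'))).congr_deriv ?_
  rw [show 1 - σ - 1 = -σ by ring, rpow_one_sub_eq_mul_rpow_neg hx]
  field_simp
  ring

lemma antitoneOn_log_mul_rpow_neg {σ : ℝ} (hσ : 1 ≤ σ) :
    AntitoneOn (fun x => log x * x ^ (-σ)) {x | exp 1 ≤ x} := by
  intro a ha b hb hab
  have ha0 : 0 < a := (exp_pos 1).trans_le ha
  have hb0 : 0 < b := ha0.trans_le hab
  have hfactor : ∀ x : ℝ, 0 < x → log x * x ^ (-σ) = log x / x * x ^ (1 - σ) := by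
    intro x hx
    rw [rpow_one_sub_eq_mul_rpow_neg hx]
    field_simp
  simp only [hfactor a ha0, hfactor b hb0]
  exact mul_le_mul (log_div_self_antitoneOn ha hb hab)
    (rpow_le_rpow_of_nonpos ha0 hab (by linarith)) (rpow_nonneg hb0.le _)
    (div_nonneg (log_nonneg (by linarith [add_one_le_exp (1 : ℝ), show exp 1 ≤ a from ha]))
      ha0.le)

lemma log_mul_rpow_neg_le_sub_logRpowTail {σ x : ℝ} (hσ : 1 < σ) (hx : 3 ≤ x) :
    log (x + 1) * (x + 1) ^ (-σ) ≤ logRpowTail σ x - logRpowTail σ (x + 1) := by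
  have hderiv : ∀ y ∈ Set.Icc x (x + 1),
      HasDerivAt (logRpowTail σ) (-(log y * y ^ (-σ))) y :=
    fun y hy => hasDerivAt_logRpowTail hσ.ne' (by linarith [hy.1])
  obtain ⟨c, hc, hslope⟩ := exists_hasDerivAt_eq_slope (logRpowTail σ)
    (fun y => -(log y * y ^ (-σ))) (lt_add_one x)
    (fun y hy => (hderiv y hy).continuousAt.continuousWithinAt)
    (fun y hy => hderiv y (Set.Ioo_subset_Icc_self hy))
  have he : exp 1 ≤ c := by linarith [exp_one_lt_d9, hc.1]
  have hmono := antitoneOn_log_mul_rpow_neg hσ.le he (he.trans hc.2.le) hc.2.le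
  rw [add_sub_cancel_left, div_one] at hslope
  simp only at hmono hslope
  linarith

lemma sum_range_log_mul_rpow_neg_le {σ : ℝ} (hσ : 1 < σ) (K : ℕ) {N : ℕ} (hN : 3 ≤ N) :
    ∑ i ∈ Finset.range K, log ↑(i + N) * (↑(i + N) : ℝ) ^ (-σ) ≤
      log N * (N : ℝ) ^ (-σ) + logRpowTail σ N := by
  induction K generalizing N with
  | zero =>
    have hN1 : (1 : ℝ) ≤ N := by exact_mod_cast (by omega : 1 ≤ N)
    have := logRpowTail_nonneg hσ hN1
    have : 0 ≤ log N * (N : ℝ) ^ (-σ) := by positivity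
    simp only [Finset.range_zero, Finset.sum_empty]
    linarith
  | succ K ih =>
    have hstep := log_mul_rpow_neg_le_sub_logRpowTail hσ (x := N) (by exact_mod_cast hN)
    have htail := ih (N := N + 1) (by omega)
    simp only [Finset.sum_range_succ', show ∀ i, i + 1 + N = i + (N + 1) from fun i => by omega,
      zero_add]
    push_cast at htail ⊢
    linarith

lemma summable_log_mul_rpow_neg_nat_add {σ : ℝ} (hσ : 1 < σ) {N : ℕ} (hN : 3 ≤ N) :
    Summable fun i : ℕ => log ↑(i + N) * (↑(i + N) : ℝ) ^ (-σ) :=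
  summable_of_sum_range_le (fun _ => by positivity)
    (sum_range_log_mul_rpow_neg_le hσ · hN)

lemma tsum_log_mul_rpow_neg_nat_add_le {σ : ℝ} (hσ : 1 < σ) {N : ℕ} (hN : 3 ≤ N) :
    ∑' i : ℕ, log ↑(i + N) * (↑(i + N) : ℝ) ^ (-σ) ≤
      log N * (N : ℝ) ^ (-σ) + logRpowTail σ N :=
  Real.tsum_le_of_sum_range_le (fun _ => by positivity)
    (sum_range_log_mul_rpow_neg_le hσ · hN)

lemma log_mul_rpow_neg_add_logRpowTail {σ x : ℝ} (hx : 0 < x) :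
    log x * x ^ (-σ) + logRpowTail σ x =
      x ^ (-σ) * (log x + x * (log x / (σ - 1) + 1 / (σ - 1) ^ 2)) := by
  rw [logRpowTail, rpow_one_sub_eq_mul_rpow_neg hx]
  ring

lemma log_add_one_add_mul_le {σ M : ℝ} (hσ : 2 ≤ σ) (hM : 2 ≤ M) :
    log (M + 1) + (M + 1) * (log (M + 1) / (σ - 1) + 1 / (σ - 1) ^ 2) ≤
      2 * (1 + 8 * M / σ) * log M := by
  have hσ0 : 0 < σ := by linarith
  have hσ1 : 0 < σ - 1 := by linarith
  have hlogM : 0.6931 ≤ log M := by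
    linarith [log_two_gt_d9, log_le_log (by norm_num) hM]
  have hlog_succ : log (M + 1) ≤ 2 * log M := by
    rw [← log_rpow (by linarith)]
    exact log_le_log (by linarith) (by norm_cast; nlinarith)
  have hinv : 1 / (σ - 1) ≤ 2 / σ := by
    rw [div_le_div_iff₀ hσ1 hσ0]; linarith
  have hinv_sq : 1 / (σ - 1) ^ 2 ≤ 2 / σ := by
    rw [div_le_div_iff₀ (by positivity) hσ0]; nlinarith
  have hsucc : M + 1 ≤ 3 / 2 * M := by linarith
  have hlog_succ0 : 0 ≤ log (M + 1) := log_nonneg (by linarith)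
  calc log (M + 1) + (M + 1) * (log (M + 1) / (σ - 1) + 1 / (σ - 1) ^ 2)
      ≤ 2 * log M + 3 / 2 * M * (2 * log M * (2 / σ) + 2 / σ) := by
        rw [div_eq_mul_one_div (log (M + 1))]
        gcongr
    _ ≤ 2 * (1 + 8 * M / σ) * log M := by
        have : 0 ≤ M / σ * (10 * log M - 3) := by
          apply mul_nonneg (by positivity); linarith
        field_simp
        nlinarith

lemma rpow_div_log_mul_tail_le {σ M : ℝ} (hσ : 2 ≤ σ) (hM : 2 ≤ M) :
    M ^ σ / log M * (log (M + 1) * (M + 1) ^ (-σ) + logRpowTail σ (M + 1)) ≤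
      2 * (1 + 8 * M / σ) * (1 + 1 / M) ^ (-σ) := by
  have hM0 : 0 < M := by linarith
  have hlogM : 0 < log M := log_pos (by linarith)
  have hratio : (1 + 1 / M) ^ (-σ) = M ^ σ * (M + 1) ^ (-σ) := by
    rw [one_add_div hM0.ne', div_rpow (by linarith) hM0.le, rpow_neg hM0.le]
    field_simp
  rw [log_mul_rpow_neg_add_logRpowTail (by linarith), hratio]
  calc M ^ σ / log M * ((M + 1) ^ (-σ) *
        (log (M + 1) + (M + 1) * (log (M + 1) / (σ - 1) + 1 / (σ - 1) ^ 2)))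
      = M ^ σ * (M + 1) ^ (-σ) / log M *
        (log (M + 1) + (M + 1) * (log (M + 1) / (σ - 1) + 1 / (σ - 1) ^ 2)) := by ring
    _ ≤ M ^ σ * (M + 1) ^ (-σ) / log M * (2 * (1 + 8 * M / σ) * log M) := by
        gcongr
        exact log_add_one_add_mul_le hσ hM
    _ = 2 * (1 + 8 * M / σ) * (M ^ σ * (M + 1) ^ (-σ)) := by field_simp

open ArithmeticFunction (vonMangoldt vonMangoldt_nonneg vonMangoldt_le_log vonMangoldt_ne_zero_iff
  vonMangoldt_apply_prime)
open LSeries (term term_of_ne_zero norm_term_eq)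
open scoped ArithmeticFunction.vonMangoldt LSeries.notation

namespace DirichletCharacter

variable {q : ℕ} (χ : DirichletCharacter ℂ q)

lemma deriv_LFunction_div_eq_neg_LSeries_twist_vonMangoldt [NeZero q] {s : ℂ} (hs : 1 < s.re) :
    deriv (LFunction χ) s / LFunction χ s = -L (↗χ * ↗Λ) s := by
  rw [LSeries_twist_vonMangoldt_eq χ hs, deriv_LFunction_eq_deriv_LSeries χ hs,
    LFunction_eq_LSeries χ hs, neg_div, neg_neg]

/-- A prime power `n = p ^ k < m` has `p < m`, hence `p ∣ q` and `χ n = 0`. -/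
lemma twist_vonMangoldt_eq_zero_of_lt {m n : ℕ} (hm : ∀ p : ℕ, p.Prime → ¬ p ∣ q → m ≤ p)
    (hn : n < m) : (↗χ * ↗Λ) n = 0 := by
  by_cases hΛ : Λ n = 0
  · simp [hΛ]
  obtain ⟨p, k, hp, hk, rfl⟩ := vonMangoldt_ne_zero_iff.mp hΛ
  have hpq : p ∣ q := by
    by_contra hpq
    have := Nat.le_self_pow hk.ne' p
    have := hm p hp.nat_prime hpq
    omega
  have hnonunit : ¬ IsUnit ((p ^ k : ℕ) : ZMod q) := by
    rw [ZMod.isUnit_iff_coprime, Nat.coprime_pow_left_iff hk, hp.nat_prime.coprime_iff_not_dvd,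
      not_not]
    exact hpq
  simp only [Pi.mul_apply, χ.map_nonunit hnonunit, zero_mul]

lemma LSeries_twist_vonMangoldt_eq_term_add_tsum {m : ℕ}
    (hm : ∀ p : ℕ, p.Prime → ¬ p ∣ q → m ≤ p) {s : ℂ} (hs : 1 < s.re) :
    L (↗χ * ↗Λ) s = term (↗χ * ↗Λ) s m + ∑' k, term (↗χ * ↗Λ) s (k + (m + 1)) := by
  rw [LSeries, ← (LSeriesSummable_twist_vonMangoldt χ hs).sum_add_tsum_nat_add (m + 1),
    Finset.sum_range_succ, Finset.sum_eq_zero fun n hn => ?_, zero_add]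
  simp [term, χ.twist_vonMangoldt_eq_zero_of_lt hm (Finset.mem_range.mp hn)]

lemma norm_term_twist_vonMangoldt_le (s : ℂ) (n : ℕ) :
    ‖term (↗χ * ↗Λ) s n‖ ≤ log n * (n : ℝ) ^ (-s.re) := by
  rw [norm_term_eq]
  split_ifs with hn
  · simp [hn]
  rw [rpow_neg (Nat.cast_nonneg n), ← div_eq_mul_inv, Pi.mul_apply, norm_mul,
    Complex.norm_real, norm_of_nonneg vonMangoldt_nonneg]
  gcongr
  calc ‖χ n‖ * Λ n ≤ 1 * log n :=
        mul_le_mul (χ.norm_le_one _) vonMangoldt_le_log vonMangoldt_nonneg zero_le_one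
    _ = log n := one_mul _

lemma norm_tsum_term_twist_vonMangoldt_nat_add_le {s : ℂ} (hs : 1 < s.re) {N : ℕ} (hN : 3 ≤ N) :
    ‖∑' k, term (↗χ * ↗Λ) s (k + N)‖ ≤ log N * (N : ℝ) ^ (-s.re) + logRpowTail s.re N :=
  (tsum_of_norm_bounded (summable_log_mul_rpow_neg_nat_add hs hN).hasSum
    fun k => χ.norm_term_twist_vonMangoldt_le s (k + N)).trans
    (tsum_log_mul_rpow_neg_nat_add_le hs hN)

lemma norm_natCast_eq_one_of_coprime {n : ℕ} (hn : n.Coprime q) : ‖χ n‖ = 1 := by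
  simpa using χ.unit_norm_eq_one ((ZMod.isUnit_iff_coprime n q).mpr hn).unit

lemma norm_cpow_div_mul_log {m : ℕ} (hm : m.Prime) (hmq : ¬ m ∣ q) (s : ℂ) :
    ‖(m : ℂ) ^ s / (χ m * log m)‖ = (m : ℝ) ^ s.re / log m := by
  rw [norm_div, norm_mul, Complex.norm_natCast_cpow_of_pos hm.pos,
    χ.norm_natCast_eq_one_of_coprime (hm.coprime_iff_not_dvd.mpr hmq),
    one_mul, Complex.norm_real, norm_of_nonneg (log_natCast_nonneg m)]

lemma cpow_div_mul_log_mul_term_twist_vonMangoldt {m : ℕ} (hm : m.Prime) (hmq : ¬ m ∣ q)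
    (s : ℂ) :
    (m : ℂ) ^ s / (χ m * log m) * term (↗χ * ↗Λ) s m = 1 := by
  have hχ : χ m ≠ 0 :=
    norm_ne_zero_iff.mp (by simp [χ.norm_natCast_eq_one_of_coprime (hm.coprime_iff_not_dvd.mpr hmq)])
  have hlog : (log m : ℂ) ≠ 0 :=
    Complex.ofReal_ne_zero.mpr (log_pos (Nat.one_lt_cast.mpr hm.one_lt)).ne'
  have hpow : (m : ℂ) ^ s ≠ 0 := Complex.cpow_ne_zero_iff.mpr (Or.inl (mod_cast hm.ne_zero))
  rw [term_of_ne_zero hm.ne_zero, Pi.mul_apply, vonMangoldt_apply_prime hm]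
  field_simp

end DirichletCharacter

theorem stmt2_general (q : ℕ) [NeZero q] (χ : DirichletCharacter ℂ q) (m : ℕ)
    (hm_prime : m.Prime) (hm_ndvd : ¬ m ∣ q)
    (hm_min : ∀ p : ℕ, p.Prime → ¬ p ∣ q → m ≤ p)
    (s : ℂ) (hs : 2 ≤ s.re) :
    ‖-((m : ℂ) ^ s / (χ (m : ZMod q) * Real.log m)) *
        (deriv (DirichletCharacter.LFunction χ) s / DirichletCharacter.LFunction χ s) - 1‖ ≤
      2 * (1 + 8 * m / s.re) * (1 + 1 / (m : ℝ)) ^ (-s.re) := by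
  have hs1 : 1 < s.re := by linarith
  have hm2 : 2 ≤ m := hm_prime.two_le
  set c := (m : ℂ) ^ s / (χ (m : ZMod q) * Real.log m)
  have hc : c * term (↗χ * ↗Λ) s m = 1 :=
    χ.cpow_div_mul_log_mul_term_twist_vonMangoldt hm_prime hm_ndvd s
  rw [χ.deriv_LFunction_div_eq_neg_LSeries_twist_vonMangoldt hs1,
    χ.LSeries_twist_vonMangoldt_eq_term_add_tsum hm_min hs1,
    show ∀ a b : ℂ, -c * -(a + b) - 1 = c * a - 1 + c * b from fun a b => by ring, hc, sub_self,
    zero_add, norm_mul, χ.norm_cpow_div_mul_log hm_prime hm_ndvd]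
  calc (m : ℝ) ^ s.re / log m * ‖∑' k, term (↗χ * ↗Λ) s (k + (m + 1))‖
      ≤ (m : ℝ) ^ s.re / log m *
          (log ↑(m + 1) * (↑(m + 1) : ℝ) ^ (-s.re) + logRpowTail s.re ↑(m + 1)) := by
        gcongr
        exact χ.norm_tsum_term_twist_vonMangoldt_nat_add_le hs1 (by omega)
    _ ≤ 2 * (1 + 8 * m / s.re) * (1 + 1 / (m : ℝ)) ^ (-s.re) := by
        push_cast
        exact rpow_div_log_mul_tail_le hs (by exact_mod_cast hm2)

theorem stmt2 (q : ℕ) (hq : 1 < q) [NeZero q] (χ : DirichletCharacter ℂ q) (m : ℕ)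
    (hm_prime : m.Prime) (hm_ndvd : ¬ m ∣ q)
    (hm_min : ∀ p : ℕ, p.Prime → ¬ p ∣ q → m ≤ p)
    (s : ℂ) (hs : 2 ≤ s.re) :
    ‖-((m : ℂ) ^ s / (χ (m : ZMod q) * Real.log m)) *
        (deriv (DirichletCharacter.LFunction χ) s / DirichletCharacter.LFunction χ s) - 1‖ ≤
      2 * (1 + 8 * m / s.re) * (1 + 1 / (m : ℝ)) ^ (-s.re) :=
  stmt2_general q χ m hm_prime hm_ndvd hm_min s hs
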